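/- Let P^⊥ be the linear cellular automaton shift determined by Φ and let s_0, s_1, …, s_k ∈ ℤ^d be pairwise distinct elements all having last coordinate equal to 0. Then {s_0,…,s_k} is a mixing set for P^⊥: for all Borel sets A_0, …, A_k ⊆ P^⊥, μ(⋂_{i=0}^{k} σ_{m·s_i}⁻¹(A_i)) tends to ∏_{i=0}^{k} μ(A_i) as m → ∞ in ℕ. -/

import Mathlib

open MeasureTheory Filter Topology

namespace LCA

/-- The full shift `𝔽_p^{ℤ^d}`. -/
abbrev Full (p d : ℕ) : Type := (Fin d → ℤ) → ZMod p

/-- The shift action: `(σ_g x)(n) = x(n+g)`. -/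
def shift (p d : ℕ) (g : Fin d → ℤ) (x : Full p d) : Full p d := fun n => x (n + g)

/-- `e_d = (0,…,0,1)`, the exponent of the "time" variable `X_d`. -/
def eLast (d : ℕ) : Fin d → ℤ := fun i => if (i : ℕ) = d - 1 then 1 else 0

/-- The linear cellular automaton shift `P^⊥` for `P = X_d − Φ`, as a set:
all `x` with `x(n+e_d) = Σ_{m ∈ S(Φ)} Φ(m)·x(n+m)` for every `n`. -/
def Pperp (p d : ℕ) (Φ : (Fin d → ℤ) →₀ ZMod p) : Set (Full p d) :=
  {x | ∀ n : Fin d → ℤ, x (n + eLast d) = ∑ m ∈ Φ.support, Φ m * x (n + m)}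

/-- `P^⊥` as a closed, shift-invariant subgroup of the full shift. -/
def PperpGroup (p d : ℕ) (Φ : (Fin d → ℤ) →₀ ZMod p) : AddSubgroup (Full p d) where
  carrier := Pperp p d Φ
  zero_mem' := by intro n; simp
  add_mem' := by
    intro x y hx hy n
    simp only [Pi.add_apply, hx n, hy n, mul_add, Finset.sum_add_distrib]
  neg_mem' := by
    intro x hx n
    simp only [Pi.neg_apply, hx n, mul_neg, Finset.sum_neg_distrib, neg_inj]

lemma shift_mem_Pperp (p d : ℕ) (Φ : (Fin d → ℤ) →₀ ZMod p) (g : Fin d → ℤ)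
    {x : Full p d} (hx : x ∈ Pperp p d Φ) : shift p d g x ∈ Pperp p d Φ := by
  intro n
  simpa [shift, add_right_comm] using hx (n + g)

/-- The shift action restricted to `P^⊥`. -/
def shiftSub (p d : ℕ) (Φ : (Fin d → ℤ) →₀ ZMod p) (g : Fin d → ℤ)
    (x : PperpGroup p d Φ) : PperpGroup p d Φ :=
  ⟨shift p d g x.1, shift_mem_Pperp p d Φ g x.2⟩

end LCA

namespace LCA

/-- Borel σ-algebra on `P^⊥` (with the subspace topology). -/
noncomputable instance (p d : ℕ) (Φ : (Fin d → ℤ) →₀ ZMod p) :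
    MeasurableSpace (PperpGroup p d Φ) := borel _

instance (p d : ℕ) (Φ : (Fin d → ℤ) →₀ ZMod p) : BorelSpace (PperpGroup p d Φ) := ⟨rfl⟩

end LCA

open LCA MeasureTheory Filter Topology

/-!
The relation `x(n + e_d) = Σ_m Φ(m) x(n + m)` computes each horizontal layer of a point of
`P^⊥` from the layer below it, and conversely every layer has a predecessor: convolution with
`Φ ≠ 0` is onto `𝔽_p^{ℤ^d}`, because on a finite window its transpose is multiplication by `Φ`
in the domain `𝔽_p[ℤ^d]`, and compactness passes from finite windows to the whole space. Hence
any pattern on a horizontal hyperplane extends to a point of `P^⊥`; restricting `P^⊥` to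
finitely many sites of one horizontal line is onto, and by translation invariance Haar measure
gives all patterns on these sites the same mass.

Every cylinder set is determined by finitely many sites of a single horizontal line below it.
For large `m` the windows `W + m • s_i` on that line are pairwise disjoint, so
`μ (⋂ σ_{m s_i}⁻¹ B_i) = ∏ μ (B_i)` holds exactly for such cylinders `B_i`. Cylinders are dense
in the measure algebra and the shifts preserve `μ`, which gives the limit for all Borel sets.
-/

open Function Set
open scoped ENNReal symmDiff Pointwise

theorem Function.Surjective.exists_int_orbit {α : Type*} {f : α → α} (hf : Surjective f)
    (a : α) : ∃ l : ℤ → α, l 0 = a ∧ ∀ t, l (t + 1) = f (l t) := by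
  let g := surjInv hf
  refine ⟨fun t => if 0 ≤ t then f^[t.toNat] a else g^[(-t).toNat] a, by simp, fun t => ?_⟩
  rcases lt_trichotomy t (-1) with ht | rfl | ht
  · have h1 : (-t).toNat = (-(t + 1)).toNat + 1 := by omega
    simp only [show ¬ 0 ≤ t by omega, show ¬ 0 ≤ t + 1 by omega, if_false, h1,
      iterate_succ_apply', rightInverse_surjInv hf _, g]
  · simp [g, rightInverse_surjInv hf a]
  · have h1 : (t + 1).toNat = t.toNat + 1 := by omega
    simp only [show 0 ≤ t by omega, show 0 ≤ t + 1 by omega, if_true, h1, iterate_succ_apply']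

lemma eventually_injective_add_nsmul {M I J : Type*} [AddCommGroup M] [IsAddTorsionFree M]
    [Finite I] [Finite J] {s : I → M} (hs : Injective s) {ι : J → M} (hι : Injective ι) :
    ∀ᶠ m : ℕ in atTop, Injective fun q : I × J => ι q.2 + m • s q.1 := by
  have key : ∀ q q' : I × J,
      ∀ᶠ m : ℕ in atTop, ι q.2 + m • s q.1 = ι q'.2 + m • s q'.1 → q = q' := by
    rintro ⟨i, j⟩ ⟨i', j'⟩
    by_cases hii : i = i'
    · subst hii
      exact Eventually.of_forall fun m h => Prod.ext rfl (hι (add_right_cancel h))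
    · have hmul := (smul_left_injective ℤ (sub_ne_zero.mpr (hs.ne hii))).comp
        Nat.cast_injective
      have hfin : {m : ℕ | m • (s i - s i') = ι j' - ι j}.Finite :=
        Set.Subsingleton.finite fun m hm m' hm' => hmul (by simp_all [natCast_zsmul])
      filter_upwards [Nat.cofinite_eq_atTop ▸ hfin.compl_mem_cofinite] with m hm h
      refine absurd ?_ hm
      rw [Set.mem_ofPred_eq, smul_sub, sub_eq_sub_iff_add_eq_add, add_comm, h, add_comm]
  filter_upwards [eventually_all.mpr fun q => eventually_all.mpr (key q)] with m hm
  exact fun q q' => hm q q'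

theorem ENNReal.prod_le_prod_add_sum {I : Type*} {s : Finset I} {a b c : I → ℝ≥0∞}
    (ha : ∀ i ∈ s, a i ≤ 1) (hb : ∀ i ∈ s, b i ≤ 1) (h : ∀ i ∈ s, a i ≤ b i + c i) :
    ∏ i ∈ s, a i ≤ ∏ i ∈ s, b i + ∑ i ∈ s, c i := by
  classical
  induction s using Finset.induction_on with
  | empty => simp
  | insert j s hj ih =>
    simp only [Finset.mem_insert, forall_eq_or_imp] at ha hb h
    have hbs : ∏ i ∈ s, b i ≤ 1 := Finset.prod_le_one' hb.2
    rw [Finset.prod_insert hj, Finset.prod_insert hj, Finset.sum_insert hj]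
    calc a j * ∏ i ∈ s, a i
        ≤ a j * (∏ i ∈ s, b i + ∑ i ∈ s, c i) := by gcongr; exact ih ha.2 hb.2 h.2
      _ ≤ (b j + c j) * ∏ i ∈ s, b i + ∑ i ∈ s, c i := by
          rw [mul_add]
          gcongr
          · exact h.1
          · exact mul_le_of_le_one_left' ha.1
      _ ≤ b j * ∏ i ∈ s, b i + (c j + ∑ i ∈ s, c i) := by
          rw [add_mul, add_assoc]
          gcongr
          exact mul_le_of_le_one_right' hbs

namespace MeasureTheory

theorem measure_preimage_eq_card_div {G H : Type*} [AddGroup G] [MeasurableSpace G]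
    [MeasurableAdd G] (μ : Measure G) [IsProbabilityMeasure μ] [μ.IsAddLeftInvariant]
    [AddGroup H] [Finite H] {r : G →+ H} (hr : Surjective r)
    (hmeas : ∀ S, MeasurableSet (r ⁻¹' S)) (S : Set H) :
    μ (r ⁻¹' S) = Nat.card S / Nat.card H := by
  classical
  have := Fintype.ofFinite H
  have hfiber : ∀ h, μ (r ⁻¹' {h}) = μ (r ⁻¹' {0}) := fun h => by
    obtain ⟨g, rfl⟩ := hr h
    rw [← measure_preimage_add μ (-g) (r ⁻¹' {0})]
    congr 1
    ext x
    simp only [Set.mem_preimage, Set.mem_singleton_iff, map_add, map_neg]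
    rw [neg_add_eq_zero, eq_comm]
  have hcount : ∀ S : Set H, μ (r ⁻¹' S) = Nat.card S * μ (r ⁻¹' {0}) := fun S =>
    calc μ (r ⁻¹' S) = ∑ h ∈ S.toFinset, μ (r ⁻¹' {h}) := by
          rw [sum_measure_preimage_singleton _ fun h _ => hmeas {h}, S.coe_toFinset]
      _ = Nat.card S * μ (r ⁻¹' {0}) := by
          rw [Finset.sum_congr rfl fun h _ => hfiber h, Finset.sum_const, nsmul_eq_mul,
            Nat.card_eq_card_toFinset]
  have hH : (Nat.card H : ℝ≥0∞) ≠ 0 := by simp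
  have h0 : μ (r ⁻¹' {0}) = 1 / Nat.card H := by
    rw [ENNReal.eq_div_iff hH (ENNReal.natCast_ne_top _), ← Nat.card_univ, ← hcount,
      Set.preimage_univ, measure_univ]
  rw [hcount, h0, mul_one_div]

lemma IsSetAlgebra.image_preimage {α β : Type*} {𝒜 : Set (Set β)} (h𝒜 : IsSetAlgebra 𝒜)
    (f : α → β) : IsSetAlgebra ((f ⁻¹' ·) '' 𝒜) where
  empty_mem := ⟨∅, h𝒜.empty_mem, rfl⟩
  compl_mem := by
    rintro _ ⟨s, hs, rfl⟩
    exact ⟨sᶜ, h𝒜.compl_mem hs, rfl⟩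
  union_mem := by
    rintro _ _ ⟨s, hs, rfl⟩ ⟨t, ht, rfl⟩
    exact ⟨s ∪ t, h𝒜.union_mem hs ht, rfl⟩

section SymmDiff

variable {α I : Type*} [MeasurableSpace α] [Fintype I] (μ : Measure α)

lemma measure_iInter_le_add_sum_symmDiff (X Y : I → Set α) :
    μ (⋂ i, X i) ≤ μ (⋂ i, Y i) + ∑ i, μ (X i ∆ Y i) :=
  calc μ (⋂ i, X i) ≤ μ ((⋂ i, Y i) ∪ ⋃ i, X i ∆ Y i) := measure_mono fun x hx => by
        by_cases hy : ∀ i, x ∈ Y i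
        · exact Or.inl (mem_iInter.mpr hy)
        · obtain ⟨i, hi⟩ := not_forall.mp hy
          exact Or.inr (mem_iUnion.mpr ⟨i, Or.inl ⟨mem_iInter.mp hx i, hi⟩⟩)
    _ ≤ μ (⋂ i, Y i) + ∑ i, μ (X i ∆ Y i) :=
        (measure_union_le _ _).trans (by gcongr; exact measure_iUnion_fintype_le μ _)

lemma prod_measure_le_add_sum_symmDiff [IsProbabilityMeasure μ] (X Y : I → Set α) :
    ∏ i, μ (X i) ≤ ∏ i, μ (Y i) + ∑ i, μ (X i ∆ Y i) :=
  ENNReal.prod_le_prod_add_sum (fun _ _ => prob_le_one) (fun _ _ => prob_le_one)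
    fun _ _ => tsub_le_iff_left.mp le_measure_symmDiff

lemma measure_iInter_preimage_mem_Icc [IsProbabilityMeasure μ] {T : I → α → α}
    (hT : ∀ i, MeasurePreserving (T i) μ μ) {A B : I → Set α} (hA : ∀ i, MeasurableSet (A i))
    (hB : ∀ i, MeasurableSet (B i)) (hprod : μ (⋂ i, T i ⁻¹' B i) = ∏ i, μ (B i)) :
    μ (⋂ i, T i ⁻¹' A i) ∈ Icc (∏ i, μ (A i) - 2 * ∑ i, μ (A i ∆ B i))
      (∏ i, μ (A i) + 2 * ∑ i, μ (A i ∆ B i)) := by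
  have hsymm : ∀ {X Y : I → Set α}, (∀ i, MeasurableSet (X i)) → (∀ i, MeasurableSet (Y i)) →
      ∑ i, μ ((T i ⁻¹' X i) ∆ (T i ⁻¹' Y i)) = ∑ i, μ (X i ∆ Y i) := fun hX hY =>
    Finset.sum_congr rfl fun i _ => by
      rw [← preimage_symmDiff,
        (hT i).measure_preimage ((hX i).symmDiff (hY i)).nullMeasurableSet]
  have hBA : ∑ i, μ (B i ∆ A i) = ∑ i, μ (A i ∆ B i) := by simp only [symmDiff_comm]
  have hAB := measure_iInter_le_add_sum_symmDiff μ (fun i => T i ⁻¹' A i) (fun i => T i ⁻¹' B i)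
  have hBA' := measure_iInter_le_add_sum_symmDiff μ (fun i => T i ⁻¹' B i) (fun i => T i ⁻¹' A i)
  rw [hsymm hA hB] at hAB
  rw [hsymm hB hA, hBA, hprod] at hBA'
  have hprodAB := prod_measure_le_add_sum_symmDiff μ A B
  have hprodBA := prod_measure_le_add_sum_symmDiff μ B A
  rw [hBA] at hprodBA
  constructor
  · rw [tsub_le_iff_right, two_mul, ← add_assoc]
    exact hprodAB.trans (add_le_add_left hBA' _)
  · rw [two_mul, ← add_assoc]
    exact hAB.trans (add_le_add_left (hprod ▸ hprodBA) _)

theorem tendsto_measure_iInter_preimage_of_approx [IsProbabilityMeasure μ]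
    {T : ℕ → I → α → α} (hT : ∀ m i, MeasurePreserving (T m i) μ μ)
    {A : I → Set α} (hA : ∀ i, MeasurableSet (A i))
    (happrox : ∀ ε : ℝ, 0 < ε → ∃ B : I → Set α, (∀ i, MeasurableSet (B i)) ∧
      (∀ i, μ (A i ∆ B i) < ENNReal.ofReal ε) ∧
      ∀ᶠ m in atTop, μ (⋂ i, T m i ⁻¹' B i) = ∏ i, μ (B i)) :
    Tendsto (fun m => μ (⋂ i, T m i ⁻¹' A i)) atTop (𝓝 (∏ i, μ (A i))) := by
  refine (ENNReal.tendsto_nhds (ENNReal.prod_ne_top fun i _ => measure_ne_top μ _)).mpr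
    fun ε hε => ?_
  have hI : (2 * Fintype.card I : ℝ≥0∞) ≠ ⊤ :=
    ENNReal.mul_ne_top ENNReal.ofNat_ne_top (ENNReal.natCast_ne_top _)
  obtain ⟨δ, -, hδ, hδε⟩ := ENNReal.lt_iff_exists_real_btwn.mp (ENNReal.div_pos hε.ne' hI)
  obtain ⟨B, hB, hAB, hprod⟩ := happrox δ (ENNReal.ofReal_pos.mp hδ)
  have hE : 2 * ∑ i, μ (A i ∆ B i) ≤ ε := by
    have hEδ := Finset.sum_le_card_nsmul Finset.univ _ _ fun i _ => ((hAB i).trans hδε).le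
    rw [Finset.card_univ, nsmul_eq_mul] at hEδ
    calc 2 * ∑ i, μ (A i ∆ B i) ≤ 2 * (Fintype.card I * (ε / (2 * Fintype.card I))) := by
          gcongr
      _ ≤ ε := by rw [← mul_assoc]; exact ENNReal.mul_div_le
  filter_upwards [hprod] with m hm
  exact Icc_subset_Icc (tsub_le_tsub_left hE _) (add_le_add_right hE _)
    (measure_iInter_preimage_mem_Icc μ (hT m) hA hB hm)

end SymmDiff

end MeasureTheory

namespace LCA
section Convolution

variable {G K : Type*} [AddCommGroup G]

section CommRing

variable [CommRing K]

-- `x ∈ P^⊥` means `shift p d (eLast d) x = conv Φ x`.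
noncomputable def conv (Φ : G →₀ K) : (G → K) →ₗ[K] (G → K) where
  toFun z n := ∑ m ∈ Φ.support, Φ m * z (n + m)
  map_add' z w := by ext n; simp [mul_add, Finset.sum_add_distrib]
  map_smul' c z := by ext n; simp [Finset.mul_sum, mul_left_comm]

lemma conv_apply (Φ : G →₀ K) (z : G → K) (n : G) :
    conv Φ z n = ∑ m ∈ Φ.support, Φ m * z (n + m) := rfl

lemma conv_single [DecidableEq G] (Φ : G →₀ K) (v u : G) :
    conv Φ (Pi.single v 1) u = Φ (v - u) := by
  simp [conv_apply, Pi.single_apply, ← eq_sub_iff_add_eq']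

lemma continuous_conv [TopologicalSpace K] [IsTopologicalRing K] (Φ : G →₀ K) :
    Continuous (conv Φ) :=
  continuous_pi fun _ =>
    continuous_finsetSum _ fun _ _ => continuous_const.mul (continuous_apply _)

end CommRing

variable [Field K]

lemma eq_zero_of_sum_mul_sub_eq_zero [NoZeroDivisors (AddMonoidAlgebra K G)] {Φ : G →₀ K}
    (hΦ : Φ ≠ 0) {U : Finset G} (c : U → K) (h : ∀ v, ∑ u, c u * Φ (v - u) = 0) : c = 0 := by
  classical
  set C : AddMonoidAlgebra K G := ∑ u : U, AddMonoidAlgebra.single (u : G) (c u)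
  have hCΦ : C * AddMonoidAlgebra.ofCoeff Φ = 0 := by
    ext v
    simpa [C, Finset.sum_mul, AddMonoidAlgebra.coeff_single_mul_apply, neg_add_eq_sub] using h v
  have hC : C = 0 :=
    (mul_eq_zero.mp hCΦ).resolve_right fun h0 => hΦ (congrArg AddMonoidAlgebra.coeff h0)
  funext u
  have := congrArg (fun C : AddMonoidAlgebra K G => C.coeff u) hC
  simpa [C, AddMonoidAlgebra.coeff_single, Finsupp.single_apply, Subtype.val_inj] using this

lemma exists_conv_eqOn [NoZeroDivisors (AddMonoidAlgebra K G)] {Φ : G →₀ K} (hΦ : Φ ≠ 0)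
    (U : Finset G) (y : G → K) : ∃ z, ∀ u ∈ U, conv Φ z u = y u := by
  classical
  let Λ : (G → K) →ₗ[K] (U → K) := (LinearMap.pi fun u : U => LinearMap.proj (u : G)) ∘ₗ conv Φ
  suffices hΛ : LinearMap.range Λ = ⊤ by
    obtain ⟨z, hz⟩ := LinearMap.range_eq_top.mp hΛ fun u => y u
    exact ⟨z, fun u hu => congrFun hz ⟨u, hu⟩⟩
  by_contra hne
  obtain ⟨φ, hφ0, hker⟩ :=
    (LinearMap.range Λ).exists_le_ker_of_lt_top (lt_top_iff_ne_top.mpr hne)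
  -- the coefficients of `φ` form a finitely supported `c` with `c ⋆ Φ = 0`
  have hc := eq_zero_of_sum_mul_sub_eq_zero hΦ (fun u => φ fun j => if u = j then 1 else 0)
    fun v => by
      have := hker (LinearMap.mem_range_self Λ (Pi.single v 1))
      rw [LinearMap.mem_ker, LinearMap.pi_apply_eq_sum_univ] at this
      simpa [Λ, conv_single, mul_comm] using this
  exact hφ0 (LinearMap.ext fun x => by
    simp [LinearMap.pi_apply_eq_sum_univ φ x, funext_iff.mp hc])

theorem conv_surjective [NoZeroDivisors (AddMonoidAlgebra K G)] [TopologicalSpace K]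
    [DiscreteTopology K] [Finite K] {Φ : G →₀ K} (hΦ : Φ ≠ 0) : Surjective (conv Φ) := by
  intro y
  suffices y ∈ closure (range (conv Φ)) by
    rwa [(isCompact_range (continuous_conv Φ)).isClosed.closure_eq] at this
  rw [mem_closure_iff]
  intro o ho hyo
  obtain ⟨I, u, hu, hIu⟩ := isOpen_pi_iff.mp ho y hyo
  obtain ⟨z, hz⟩ := exists_conv_eqOn hΦ I y
  exact ⟨conv Φ z, hIu fun a ha => (hz a ha).symm ▸ (hu a ha).2, z, rfl⟩

end Convolution

variable {p d : ℕ} {Φ : (Fin d → ℤ) →₀ ZMod p}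

lemma shift_surjective (g : Fin d → ℤ) : Surjective (shift p d g) :=
  fun x => ⟨shift p d (-g) x, funext fun n => by simp [shift]⟩

variable {i0 : Fin d}

theorem exists_mem_Pperp_eqOn_line [Fact p.Prime] (hΦ0 : Φ ≠ 0)
    (hΦ : ∀ m ∈ Φ.support, m i0 = 0) (he : eLast d i0 = 1) (t0 : ℤ) (b : Full p d) :
    ∃ x ∈ Pperp p d Φ, ∀ n, n i0 = t0 → x n = b n := by
  obtain ⟨l, hl0, hl⟩ :=
    ((shift_surjective (-eLast d)).comp (conv_surjective hΦ0)).exists_int_orbit b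
  -- `l t` is the configuration whose layer at height `t0 + t` is that of `x`
  refine ⟨fun n => l (n i0 - t0) n, fun n => ?_, fun n hn => by simp [hn, hl0]⟩
  simp only [Pi.add_apply, he, add_sub_right_comm, hl, comp_apply, shift, add_neg_cancel_right,
    conv_apply]
  exact Finset.sum_congr rfl fun m hm => by rw [hΦ m hm, add_zero]

lemma exists_finset_determining_layer_above (hΦ : ∀ m ∈ Φ.support, m i0 = 0) (t : ℕ) :
    ∃ D : Finset (Fin d → ℤ), (∀ m ∈ D, m i0 = 0) ∧
      ∀ x ∈ Pperp p d Φ, ∀ n, (∀ m ∈ D, x (n + m) = 0) → x (n + t • eLast d) = 0 := by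
  induction t with
  | zero => exact ⟨{0}, by simp, fun x _ n h => by simpa using h 0 (by simp)⟩
  | succ t ih =>
    obtain ⟨D, hD, hDx⟩ := ih
    refine ⟨Φ.support + D, ?_, fun x hx n h => ?_⟩
    · simp only [Finset.mem_add]
      rintro _ ⟨a, ha, b, hb, rfl⟩
      simp [hΦ a ha, hD b hb]
    · rw [succ_nsmul, ← add_assoc, hx]
      refine Finset.sum_eq_zero fun m hm => ?_
      rw [add_right_comm, hDx x hx (n + m) fun m' hm' => ?_, mul_zero]
      rw [add_assoc]
      exact h _ (Finset.add_mem_add hm hm')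

lemma exists_line_determining (hΦ : ∀ m ∈ Φ.support, m i0 = 0) (he : eLast d i0 = 1)
    (W : Finset (Fin d → ℤ)) :
    ∃ (t0 : ℤ) (W' : Finset (Fin d → ℤ)), (∀ w ∈ W', w i0 = t0) ∧
      ∀ x ∈ Pperp p d Φ, (∀ w ∈ W', x w = 0) → ∀ w ∈ W, x w = 0 := by
  classical
  obtain ⟨t0, ht0⟩ := (W.image (· i0)).bddBelow
  have hle : ∀ w ∈ W, t0 ≤ w i0 := fun w hw => ht0 (Finset.mem_image_of_mem _ hw)
  let h : (Fin d → ℤ) → ℕ := fun w => (w i0 - t0).toNat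
  choose D hD hDx using exists_finset_determining_layer_above hΦ
  refine ⟨t0, W.biUnion fun w => (D (h w)).image (w - h w • eLast d + ·), ?_, ?_⟩
  · simp only [Finset.mem_biUnion, Finset.mem_image]
    rintro _ ⟨w, hw, m, hm, rfl⟩
    simp [hD _ m hm, he, h, Int.toNat_of_nonneg (sub_nonneg.mpr (hle w hw))]
  · intro x hx hW' w hw
    simpa using hDx (h w) x hx (w - h w • eLast d) fun m hm =>
      hW' _ (Finset.mem_biUnion.mpr ⟨w, hw, Finset.mem_image_of_mem _ hm⟩)

variable (Φ) in
def evalAt {J : Type*} (ι : J → Fin d → ℤ) : PperpGroup p d Φ →+ (J → ZMod p) where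
  toFun x j := x.1 (ι j)
  map_zero' := rfl
  map_add' _ _ := rfl

variable {J : Type*} {ι : J → Fin d → ℤ}

lemma evalAt_surjective [Fact p.Prime] (hΦ0 : Φ ≠ 0) (hΦ : ∀ m ∈ Φ.support, m i0 = 0)
    (he : eLast d i0 = 1) (hι : Injective ι) {t0 : ℤ} (hline : ∀ j, ι j i0 = t0) :
    Surjective (evalAt Φ ι) := by
  classical
  intro f
  obtain ⟨x, hx, hxb⟩ := exists_mem_Pperp_eqOn_line hΦ0 hΦ he t0 (extend ι f 0)
  exact ⟨⟨x, hx⟩, funext fun j => (hxb _ (hline j)).trans (hι.extend_apply f 0 j)⟩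

lemma measurableSet_preimage_evalAt [Finite J] (S : Set (J → ZMod p)) :
    MeasurableSet (evalAt Φ ι ⁻¹' S) :=
  ((isOpen_discrete S).preimage (continuous_pi fun j =>
    (continuous_apply (ι j)).comp continuous_subtype_val)).measurableSet

lemma exists_preimage_evalAt_eq {W W' : Finset (Fin d → ℤ)}
    (h : ∀ x ∈ Pperp p d Φ, (∀ w ∈ W', x w = 0) → ∀ w ∈ W, x w = 0) (S : Set (W → ZMod p)) :
    ∃ S' : Set (W' → ZMod p), evalAt Φ (↑) ⁻¹' S = evalAt Φ (↑) ⁻¹' S' := by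
  have hfac : FactorsThrough (evalAt Φ ((↑) : W → _)) (evalAt Φ ((↑) : W' → _)) :=
    fun x y hxy => by
      rw [← sub_eq_zero, ← map_sub] at hxy ⊢
      exact funext fun w => h _ (x - y).2 (fun w' hw' => congrFun hxy ⟨w', hw'⟩) w w.2
  refine ⟨extend (evalAt Φ (↑)) (evalAt Φ (↑)) 0 ⁻¹' S, ?_⟩
  ext x
  simp [hfac.extend_apply]

lemma isClosed_Pperp : IsClosed (Pperp p d Φ) := by
  have : Pperp p d Φ = {x | shift p d (eLast d) x = conv Φ x} :=
    Set.ext fun x => funext_iff.symm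
  rw [this]
  exact isClosed_eq (continuous_pi fun n => continuous_apply _) (continuous_conv Φ)

instance [NeZero p] : CompactSpace (PperpGroup p d Φ) :=
  isCompact_iff_compactSpace.mp isClosed_Pperp.isCompact

lemma measurePreserving_shiftSub [NeZero p] (μ : Measure (PperpGroup p d Φ))
    [IsProbabilityMeasure μ] [μ.IsAddHaarMeasure] (g : Fin d → ℤ) :
    MeasurePreserving (shiftSub p d Φ g) μ μ := by
  let σ : PperpGroup p d Φ →+ PperpGroup p d Φ :=
    { toFun := shiftSub p d Φ g, map_zero' := rfl, map_add' := fun _ _ => rfl }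
  have hσ : Continuous σ := continuous_induced_rng.mpr
    (continuous_pi fun n => (continuous_apply (n + g)).comp continuous_subtype_val)
  have hσsurj : Surjective σ := fun x =>
    ⟨shiftSub p d Φ (-g) x, Subtype.ext (funext fun n => by
      show x.1 (n + g + -g) = x.1 n
      rw [add_neg_cancel_right])⟩
  have := Measure.isAddHaarMeasure_map_of_isFiniteMeasure μ σ hσ hσsurj
  have := Measure.isProbabilityMeasure_map (μ := μ) hσ.aemeasurable
  exact ⟨hσ.measurable, Measure.isAddHaarMeasure_eq_of_isProbabilityMeasure _ _⟩

variable (μ : Measure (PperpGroup p d Φ))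

lemma measure_preimage_evalAt [NeZero p] [IsProbabilityMeasure μ] [μ.IsAddHaarMeasure]
    [Finite J] (hsurj : Surjective (evalAt Φ ι))
    (S : Set (J → ZMod p)) : μ (evalAt Φ ι ⁻¹' S) = Nat.card S / p ^ Nat.card J := by
  rw [measure_preimage_eq_card_div μ hsurj measurableSet_preimage_evalAt, Nat.card_fun,
    Nat.card_zmod]
  push_cast
  rfl

theorem measure_iInter_shiftSub_preimage_evalAt [Fact p.Prime] [IsProbabilityMeasure μ]
    [μ.IsAddHaarMeasure] (hΦ0 : Φ ≠ 0) (hΦ : ∀ m ∈ Φ.support, m i0 = 0) (he : eLast d i0 = 1)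
    {I : Type*} [Fintype I] [Finite J] (hι : Injective ι) {t0 : ℤ}
    (hline : ∀ j, ι j i0 = t0) {v : I → Fin d → ℤ} (hv : ∀ i, v i i0 = 0)
    (hinj : Injective fun q : I × J => ι q.2 + v q.1) (S : I → Set (J → ZMod p)) :
    μ (⋂ i, shiftSub p d Φ (v i) ⁻¹' (evalAt Φ ι ⁻¹' S i)) = ∏ i, μ (evalAt Φ ι ⁻¹' S i) := by
  have hset : ⋂ i, shiftSub p d Φ (v i) ⁻¹' (evalAt Φ ι ⁻¹' S i) =
      evalAt Φ (fun q : I × J => ι q.2 + v q.1) ⁻¹' {g | ∀ i, (fun j => g (i, j)) ∈ S i} := by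
    ext x
    simp [evalAt, shiftSub, shift]
  let e : {g : I × J → ZMod p | ∀ i, (fun j => g (i, j)) ∈ S i} ≃ ∀ i, S i :=
    ((Equiv.curry I J (ZMod p)).subtypeEquiv fun _ => Iff.rfl).trans Equiv.subtypePiEquivPi
  have hsurj := evalAt_surjective hΦ0 hΦ he hinj (t0 := t0) fun q => by simp [hline, hv]
  rw [hset, measure_preimage_evalAt μ hsurj, Nat.card_congr e, Nat.card_pi, Nat.card_prod,
    pow_mul', Nat.card_eq_fintype_card (α := I)]
  simp_rw [measure_preimage_evalAt μ (evalAt_surjective hΦ0 hΦ he hι hline), div_eq_mul_inv,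
    Finset.prod_mul_distrib, Finset.prod_const, Finset.card_univ, ENNReal.inv_pow]
  push_cast
  rfl

lemma measureDense_preimage_measurableCylinders [NeZero p] [IsFiniteMeasure μ] :
    μ.MeasureDense ((Subtype.val ⁻¹' ·) '' measurableCylinders fun _ : Fin d → ℤ => ZMod p) :=
  Measure.MeasureDense.of_generateFrom_isSetAlgebra_finite μ
    (isSetAlgebra_measurableCylinders.image_preimage _) <| by
      rw [← MeasurableSpace.comap_generateFrom, generateFrom_measurableCylinders]
      exact borel_comap.trans (congrArg _ (BorelSpace.measurable_eq (α := Full p d)).symm)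

theorem exists_line_cylinder_approx [NeZero p] [IsFiniteMeasure μ]
    (hΦ : ∀ m ∈ Φ.support, m i0 = 0) (he : eLast d i0 = 1) {I : Type*} [Fintype I]
    {A : I → Set (PperpGroup p d Φ)} (hA : ∀ i, MeasurableSet (A i)) {ε : ℝ} (hε : 0 < ε) :
    ∃ (t0 : ℤ) (W : Finset (Fin d → ℤ)) (S : I → Set (W → ZMod p)), (∀ w ∈ W, w i0 = t0) ∧
      ∀ i, μ (A i ∆ (evalAt Φ ((↑) : W → Fin d → ℤ) ⁻¹' S i)) < ENNReal.ofReal ε := by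
  choose B hB hAB using fun i =>
    (measureDense_preimage_measurableCylinders μ).approx (A i) (hA i) (measure_ne_top μ _) ε hε
  choose C hC hCB using hB
  choose V T _ hCV using fun i => (mem_measurableCylinders _).mp (hC i)
  obtain ⟨t0, W, hW, hdet⟩ := exists_line_determining hΦ he (Finset.univ.biUnion V)
  choose S hS using fun i => exists_preimage_evalAt_eq (W := V i) (W' := W)
    (fun x hx h0 w hw => hdet x hx h0 w (Finset.mem_biUnion.mpr ⟨i, Finset.mem_univ _, hw⟩))
    (T i)
  refine ⟨t0, W, S, hW, fun i => ?_⟩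
  rw [← hS i]
  convert hAB i
  rw [← hCB i, hCV i]
  rfl

end LCA

/-- Let `P^⊥` be the linear cellular automaton shift determined by `Φ` and
let `s_0,…,s_k ∈ ℤ^d` be pairwise distinct, all with last coordinate `0`.  Then
`{s_0,…,s_k}` is a mixing set for `P^⊥`: for all Borel sets `A_0,…,A_k ⊆ P^⊥`,
`μ(⋂ᵢ σ_{m·s_i}⁻¹(A_i))` tends to `∏ᵢ μ(A_i)` as `m → ∞` in `ℕ`. -/
theorem horizontal_set_is_mixing (p d : ℕ) [Fact p.Prime] (hd : 2 ≤ d)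
    (Φ : (Fin d → ℤ) →₀ ZMod p)
    (hΦsupp : ∀ m ∈ Φ.support, m ⟨d - 1, by omega⟩ = 0)
    (hΦ2 : 2 ≤ Φ.support.card)
    (μ : Measure (PperpGroup p d Φ)) [IsProbabilityMeasure μ] [μ.IsAddHaarMeasure]
    (k : ℕ) (s : Fin (k + 1) → (Fin d → ℤ)) (hinj : Function.Injective s)
    (hlast : ∀ i, s i ⟨d - 1, by omega⟩ = 0)
    (A : Fin (k + 1) → Set (PperpGroup p d Φ)) (hA : ∀ i, MeasurableSet (A i)) :
    Tendsto (fun m : ℕ => μ (⋂ i, shiftSub p d Φ (m • s i) ⁻¹' A i)) atTop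
      (nhds (∏ i, μ (A i))) := by
  have he : eLast d ⟨d - 1, by omega⟩ = 1 := by simp [eLast]
  have hΦ0 : Φ ≠ 0 := by
    rintro rfl
    simp at hΦ2
  refine tendsto_measure_iInter_preimage_of_approx μ (fun m i => measurePreserving_shiftSub μ _)
    hA fun ε hε => ?_
  obtain ⟨t0, W, S, hW, hAS⟩ := exists_line_cylinder_approx μ hΦsupp he hA hε
  refine ⟨fun i => evalAt Φ ((↑) : W → Fin d → ℤ) ⁻¹' S i,
    fun i => measurableSet_preimage_evalAt (S i), hAS, ?_⟩
  filter_upwards [eventually_injective_add_nsmul hinj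
    (Subtype.val_injective (p := (· ∈ W)))] with m hm
  exact measure_iInter_shiftSub_preimage_evalAt μ hΦ0 hΦsupp he Subtype.val_injective
    (fun w => hW w w.2) (fun i => by simp [hlast]) hm S
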